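/- Let A be a finite nonempty set and T a symmetric, irreflexive, saturated relation on A. Suppose Q ∈ 𝒫^T(A), and V', W ∈ 𝒫_T(A) are such that Q = (V'^T)^T and Q^T = (W^T)^T. Then V' ∪ W is a maximal element of 𝒫_T(A) with respect to inclusion. -/

import Mathlib

/-- For `B ⊆ A`, `B^T := {l ∈ A | ∀ l₁ ∈ B, (l₁, l) ∈ T}`. -/
def polar {α : Type*} (T : α → α → Prop) (B : Set α) : Set α :=
  {l | ∀ l₁ ∈ B, T l₁ l}

/-- `𝒫_T(A)`: subsets whose distinct elements are pairwise related by `T`. -/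
def PTset {α : Type*} (T : α → α → Prop) : Set (Set α) :=
  {U | ∀ l ∈ U, ∀ l₁ ∈ U, l₁ ≠ l → T l l₁}

/-- `𝒫^T(A)`: the image of `𝒫_T(A)` under `B ↦ B^T`. -/
def PTup {α : Type*} (T : α → α → Prop) : Set (Set α) :=
  polar T '' PTset T

/-- `T` is symmetric: for all `l ≠ l₁`, `(l, l₁) ∈ T ↔ (l₁, l) ∈ T`. -/
def SymmRel {α : Type*} (T : α → α → Prop) : Prop :=
  ∀ l l₁, l ≠ l₁ → (T l l₁ ↔ T l₁ l)

/-- `T` is irreflexive. -/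
def IrreflRel {α : Type*} (T : α → α → Prop) : Prop :=
  ∀ l, ¬ T l l

/-- `M` is a maximal element of `𝒫_T(A)` with respect to inclusion. -/
def MaxPT {α : Type*} (T : α → α → Prop) (M : Set α) : Prop :=
  M ∈ PTset T ∧ ∀ M' ∈ PTset T, M ⊆ M' → M' = M

/-- `T` is saturated: for every maximal `M ∈ 𝒫_T(A)` and every `B ⊆ M`,
`B^T = ((M \ B)^T)^T`. -/
def SaturatedRel {α : Type*} (T : α → α → Prop) : Prop :=
  ∀ M, MaxPT T M → ∀ B ⊆ M, polar T B = polar T (polar T (M \ B))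

/-! Write `V'ᵀ` for `polar T V'`. Symmetry of `T` makes `B ↦ Bᵀᵀ` a closure operator, so
`Qᵀ = V'ᵀᵀᵀ = V'ᵀ` and the hypothesis becomes `V'ᵀ = Wᵀᵀ`. Hence `W ⊆ Wᵀᵀ = V'ᵀ` links every
element of `W` to every element of `V'`, and `V' ∪ W` is a clique. An element `z` extending it
would lie in `V'ᵀ ∩ Wᵀ = Wᵀᵀ ∩ Wᵀ`, forcing `T z z`, which irreflexivity rules out. -/

section

variable {α : Type*} {T : α → α → Prop}

lemma polar_anti {B C : Set α} (h : B ⊆ C) : polar T C ⊆ polar T B :=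
  fun _ hx l hl => hx l (h hl)

lemma subset_polar_polar (hsymm : SymmRel T) (B : Set α) : B ⊆ polar T (polar T B) := by
  intro x hx m hm
  by_cases h : m = x
  · subst h
    exact hm m hx
  · exact (hsymm x m (Ne.symm h)).mp (hm x hx)

lemma polar_polar_polar (hsymm : SymmRel T) (B : Set α) :
    polar T (polar T (polar T B)) = polar T B :=
  (polar_anti (subset_polar_polar hsymm B)).antisymm (subset_polar_polar hsymm _)

lemma PTset.union_mem (hsymm : SymmRel T) {U V : Set α} (hU : U ∈ PTset T) (hV : V ∈ PTset T)
    (hUV : ∀ x ∈ U, ∀ y ∈ V, T x y) : U ∪ V ∈ PTset T := by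
  rintro l (hl | hl) l₁ (hl₁ | hl₁) hne
  · exact hU l hl l₁ hl₁ hne
  · exact hUV l hl l₁ hl₁
  · exact (hsymm l l₁ (Ne.symm hne)).mpr (hUV l₁ hl₁ l hl)
  · exact hV l hl l₁ hl₁ hne

lemma PTset.mem_polar_of_mem_diff {M S : Set α} (hM : M ∈ PTset T) (hS : S ⊆ M) {z : α}
    (hz : z ∈ M \ S) : z ∈ polar T S :=
  fun s hs => hM s (hS hs) z hz.1 fun e => hz.2 (e ▸ hs)

end

theorem stmt8_general {α : Type*} (T : α → α → Prop)
    (hsymm : SymmRel T) (hirr : IrreflRel T)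
    (Q : Set α) (V' W : Set α)
    (hV' : V' ∈ PTset T) (hW : W ∈ PTset T)
    (hQeq : Q = polar T (polar T V')) (hQT : polar T Q = polar T (polar T W)) :
    MaxPT T (V' ∪ W) := by
  have hVW : polar T V' = polar T (polar T W) := by
    rw [← hQT, hQeq, polar_polar_polar hsymm]
  have hWV : W ⊆ polar T V' := hVW ▸ subset_polar_polar hsymm W
  refine ⟨PTset.union_mem hsymm hV' hW fun x hx y hy => hWV hy x hx, fun M hM hsub => ?_⟩
  refine (Set.Subset.antisymm · hsub) fun z hzM => ?_
  by_contra hz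
  have hzV : z ∈ polar T V' :=
    PTset.mem_polar_of_mem_diff hM (Set.subset_union_left.trans hsub) ⟨hzM, fun h => hz (.inl h)⟩
  have hzW : z ∈ polar T W :=
    PTset.mem_polar_of_mem_diff hM (Set.subset_union_right.trans hsub) ⟨hzM, fun h => hz (.inr h)⟩
  exact hirr z ((hVW ▸ hzV) z hzW)

theorem stmt8 {α : Type*} [Fintype α] [Nonempty α] (T : α → α → Prop)
    (hsymm : SymmRel T) (hirr : IrreflRel T) (hsat : SaturatedRel T)
    (Q : Set α) (hQ : Q ∈ PTup T) (V' W : Set α)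
    (hV' : V' ∈ PTset T) (hW : W ∈ PTset T)
    (hQeq : Q = polar T (polar T V')) (hQT : polar T Q = polar T (polar T W)) :
    MaxPT T (V' ∪ W) :=
  stmt8_general T hsymm hirr Q V' W hV' hW hQeq hQT
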